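/- Let m > 1 and L ≥ 0. Define B(v) = (1/m) ∫₀^v (L - s)^{1/m - 1} s ds for 0 ≤ v ≤ L. Then for every v with 0 ≤ v^m ≤ L, one has B((L - v^m)₊) ≤ (L - v^m)₊ · (L^{1/m} - v)₊. -/

import Mathlib

open MeasureTheory intervalIntegral

/-! Bounding the weight `s` by `w = L - v ^ m` on `[0, w]` gives
`B(w) ≤ (w / m) ∫₀^w (L - s)^{1/m - 1} ds`, and that integral is
`m (L^{1/m} - (L - w)^{1/m}) = m (L^{1/m} - v)`. -/

lemma intervalIntegrable_sub_rpow {r : ℝ} (hr : -1 < r) (L a b : ℝ) :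
    IntervalIntegrable (fun s => (L - s) ^ r) volume a b := by
  simpa using (intervalIntegrable_rpow' (a := L - a) (b := L - b) hr).comp_sub_left L

lemma integral_sub_rpow_sub_one {p : ℝ} (hp : 0 < p) (L w : ℝ) :
    ∫ s in (0:ℝ)..w, (L - s) ^ (p - 1) = (L ^ p - (L - w) ^ p) / p := by
  rw [integral_comp_sub_left (fun u => u ^ (p - 1)) L,
    integral_rpow (Or.inl (by linarith)), sub_add_cancel, sub_zero]

lemma integral_mul_id_le_mul_integral {f : ℝ → ℝ} {w : ℝ} (hw : 0 ≤ w)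
    (hf : IntervalIntegrable f volume 0 w) (hf0 : ∀ s ∈ Set.Icc 0 w, 0 ≤ f s) :
    ∫ s in (0:ℝ)..w, f s * s ≤ w * ∫ s in (0:ℝ)..w, f s := by
  rw [← intervalIntegral.integral_const_mul]
  refine integral_mono_on hw (hf.mul_continuousOn continuousOn_id) (hf.const_mul w) fun s hs => ?_
  rw [mul_comm w]
  exact mul_le_mul_of_nonneg_left hs.2 (hf0 s hs)

theorem stmt0_general (m L v : ℝ) (hm : 1 < m) (hv : 0 ≤ v) (hvm : v ^ m ≤ L) :
    (1/m) * ∫ s in (0:ℝ)..(max (L - v ^ m) 0), (L - s) ^ (1/m - 1) * s ≤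
      max (L - v ^ m) 0 * max (L ^ (1/m) - v) 0 := by
  have hm0 : 0 < m := zero_lt_one.trans hm
  have hv_root : (v ^ m) ^ (1/m) = v := by
    rw [one_div, Real.rpow_rpow_inv hv hm0.ne']
  have hv_le : v ≤ L ^ (1/m) :=
    hv_root ▸ Real.rpow_le_rpow (Real.rpow_nonneg hv m) hvm (by positivity)
  rw [max_eq_left (sub_nonneg.mpr hvm), max_eq_left (sub_nonneg.mpr hv_le)]
  have hweight : ∀ s ∈ Set.Icc 0 (L - v ^ m), 0 ≤ (L - s) ^ (1/m - 1) := fun s hs =>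
    Real.rpow_nonneg (by linarith [hs.2, Real.rpow_nonneg hv m]) _
  calc (1/m) * ∫ s in (0:ℝ)..L - v ^ m, (L - s) ^ (1/m - 1) * s
      ≤ (1/m) * ((L - v ^ m) * ∫ s in (0:ℝ)..L - v ^ m, (L - s) ^ (1/m - 1)) := by
        gcongr
        exact integral_mul_id_le_mul_integral (sub_nonneg.mpr hvm)
          (intervalIntegrable_sub_rpow (by linarith [one_div_pos.mpr hm0]) _ _ _) hweight
    _ = (L - v ^ m) * (L ^ (1/m) - v) := by
        rw [integral_sub_rpow_sub_one (by positivity), sub_sub_cancel, hv_root]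
        field_simp

/-- For `m > 1`, `L ≥ 0`, `0 ≤ v` with `v^m ≤ L`, the function
`B(w) = (1/m) ∫₀^w (L - s)^{1/m-1} s ds` satisfies
`B((L - v^m)₊) ≤ (L - v^m)₊ (L^{1/m} - v)₊`. -/
theorem stmt0 (m L v : ℝ) (hm : 1 < m) (hL : 0 ≤ L) (hv : 0 ≤ v) (hvm : v ^ m ≤ L) :
    (1/m) * ∫ s in (0:ℝ)..(max (L - v ^ m) 0), (L - s) ^ (1/m - 1) * s ≤
      max (L - v ^ m) 0 * max (L ^ (1/m) - v) 0 :=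
  stmt0_general m L v hm hv hvm
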